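/- arXiv:2405.11849 — 8 statements merged into one kernel-verified Lean document; each statement's English description precedes it below -/
import Mathlib

section
/- Let ā=(a_0,...,a_{n+1}) be a jump sequence. For every j with 1 ≤ j ≤ n, the absolute-distance cost of ā is at least |a_j - j|. -/
open scoped Classical

/-- A jump sequence for a word of length `n`: `a 0 = 0`, `a (n+1) = n+1`, and
`a` restricted to `{1,…,n}` is a permutation of `{1,…,n}`. -/
def IsJumpSeq (n : ℕ) (a : ℕ → ℕ) : Prop :=
  a 0 = 0 ∧ a (n + 1) = n + 1 ∧ Set.BijOn a (Set.Icc 1 n) (Set.Icc 1 n)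

/-- The absolute-distance cost `⟦ā⟧ = Σ_{i=1}^{n+1} (|a_i - a_{i-1}| - 1)`. -/
def absCost (n : ℕ) (a : ℕ → ℕ) : ℕ :=
  ∑ i ∈ Finset.range (n + 1), (((a (i + 1) : ℤ) - (a i : ℤ)).natAbs - 1)

/-- The maximum-jump cost `max_{i=1}^{n+1} (|a_i - a_{i-1}| - 1)`. -/
def maxCost (n : ℕ) (a : ℕ → ℕ) : ℕ :=
  (Finset.range (n + 1)).sup (fun i => ((a (i + 1) : ℤ) - (a i : ℤ)).natAbs - 1)

/-- The word `w_ā = w_{a_1} ⋯ w_{a_n}` (1-based indexing into `w`). -/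
def applyJump {α : Type*} [Inhabited α] (a : ℕ → ℕ) (w : List α) : List α :=
  (List.range w.length).map (fun i => w.getD (a (i + 1) - 1) default)

/-- `i` is a turning index of the jump sequence `a`. -/
def IsTurn (a : ℕ → ℕ) (i : ℕ) : Prop :=
  (a i > a (i - 1) ∧ a i > a (i + 1)) ∨ (a i < a (i - 1) ∧ a i < a (i + 1))

/-- The number of turning indices of `a` (among `1,…,n`). -/
noncomputable def turnCount (n : ℕ) (a : ℕ → ℕ) : ℕ :=
  ((Finset.Icc 1 n).filter (fun i => IsTurn a i)).card

/-- Hamming distance between two (equal-length) words. -/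
noncomputable def hamming {α : Type*} [Inhabited α] (w w' : List α) : ℕ :=
  ((Finset.range w.length).filter (fun i => w.getD i default ≠ w'.getD i default)).card

/-! A step of length `d` costs at least `d - 1`, so by the triangle inequality the `j` steps from
`a 0 = 0` to `a j` cost at least `a j - j`, and the `n + 1 - j` steps from `a j` to
`a (n + 1) = n + 1` cost at least `j - a j`. -/

theorem abs_sub_sub_le_sum_natAbs_sub_one (f : ℕ → ℤ) {m k : ℕ} (hmk : m ≤ k) :
    |f k - f m| - (k - m : ℤ) ≤ ∑ i ∈ Finset.Ico m k, (((f (i + 1) - f i).natAbs - 1 : ℕ) : ℤ) := by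
  induction k, hmk using Nat.le_induction with
  | base => simp
  | succ k hmk ih =>
    have htriangle : |f (k + 1) - f m| ≤ |f k - f m| + |f (k + 1) - f k| := by
      simpa using abs_add_le (f k - f m) (f (k + 1) - f k)
    have hstep : |f (k + 1) - f k| - 1 ≤ (((f (k + 1) - f k).natAbs - 1 : ℕ) : ℤ) := by
      rw [Int.abs_eq_natAbs]; omega
    rw [Finset.sum_Ico_succ_top hmk]
    push_cast
    linarith

theorem abs_sub_sub_le_absCost (n : ℕ) (a : ℕ → ℕ) {m k : ℕ} (hmk : m ≤ k) (hk : k ≤ n + 1) :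
    |(a k : ℤ) - a m| - (k - m : ℤ) ≤ absCost n a := by
  have hsub : Finset.Ico m k ⊆ Finset.range (n + 1) := fun i hi =>
    Finset.mem_range.2 ((Finset.mem_Ico.1 hi).2.trans_le hk)
  calc |(a k : ℤ) - a m| - (k - m : ℤ)
      ≤ ∑ i ∈ Finset.Ico m k, ((((a (i + 1) : ℤ) - a i).natAbs - 1 : ℕ) : ℤ) :=
        abs_sub_sub_le_sum_natAbs_sub_one (fun i => (a i : ℤ)) hmk
    _ ≤ absCost n a := by
        rw [absCost]
        exact_mod_cast Finset.sum_le_sum_of_subset hsub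

theorem absCost_ge_displacement_general (n : ℕ) (a : ℕ → ℕ) (h : IsJumpSeq n a)
    (j : ℕ) (hj2 : j ≤ n) :
    ((a j : ℤ) - (j : ℤ)).natAbs ≤ absCost n a := by
  obtain ⟨h0, hn, -⟩ := h
  have hstart := abs_sub_sub_le_absCost n a (Nat.zero_le j) (by omega)
  have hend := abs_sub_sub_le_absCost n a (by omega : j ≤ n + 1) le_rfl
  rw [h0] at hstart
  rw [hn] at hend
  push_cast at hstart hend
  rw [← Nat.cast_le (α := ℤ), Nat.cast_natAbs, Int.cast_abs, Int.cast_id, abs_le]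
  constructor <;> linarith [le_abs_self ((a j : ℤ) - 0), le_abs_self ((n : ℤ) + 1 - a j)]

/-- for every `1 ≤ j ≤ n`, `⟦ā⟧ ≥ |a_j - j|`. -/
theorem absCost_ge_displacement (n : ℕ) (a : ℕ → ℕ) (h : IsJumpSeq n a)
    (j : ℕ) (hj1 : 1 ≤ j) (hj2 : j ≤ n) :
    ((a j : ℤ) - (j : ℤ)).natAbs ≤ absCost n a :=
  absCost_ge_displacement_general n a h j hj2
end

section
/- Let ā be a jump sequence of length n with maximum-jump cost at most k. Then for every m with 1 ≤ m ≤ n, the number of indices i ∈ {0,...,n} such that a_i and a_{i+1} lie on different sides of the m-cut is at most 2k+1. -/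
open scoped Classical

/-- The number of indices `i ∈ {0,…,n}` at which `a` crosses the `m`-cut. -/
noncomputable def crossCount (n m : ℕ) (a : ℕ → ℕ) : ℕ :=
  ((Finset.range (n + 1)).filter
    (fun i => (a i ≤ m ∧ m < a (i + 1)) ∨ (a (i + 1) ≤ m ∧ m < a i))).card

/-! The crossings of the `m`-cut alternate between upward and downward, starting and ending
upward, so there is exactly one more upward crossing than downward ones. An upward crossing
`a i ≤ m < a (i+1)` with a jump of length at most `k+1` forces `a i ∈ [m-k, m]`, and
injectivity of `a` allows at most `k+1` such starting points. -/

theorem card_filter_exit_add_ite_eq (p : ℕ → Prop) [DecidablePred p] (N : ℕ) :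
    ((Finset.range N).filter (fun i => p i ∧ ¬ p (i + 1))).card + (if p N then 1 else 0) =
      ((Finset.range N).filter (fun i => ¬ p i ∧ p (i + 1))).card + (if p 0 then 1 else 0) := by
  induction N with
  | zero => simp
  | succ N ih =>
    simp only [Finset.card_filter, Finset.sum_range_succ] at ih ⊢
    by_cases hN : p N <;> by_cases hN1 : p (N + 1) <;> simp [hN, hN1] at ih ⊢ <;> omega

theorem card_filter_exit_eq_card_filter_enter_add_one (p : ℕ → Prop) [DecidablePred p]
    {N : ℕ} (h0 : p 0) (hN : ¬ p N) :
    ((Finset.range N).filter (fun i => p i ∧ ¬ p (i + 1))).card =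
      ((Finset.range N).filter (fun i => ¬ p i ∧ p (i + 1))).card + 1 := by
  simpa [h0, hN] using card_filter_exit_add_ite_eq p N

theorem IsJumpSeq.injOn_Iic {n : ℕ} {a : ℕ → ℕ} (h : IsJumpSeq n a) :
    Set.InjOn a (Set.Iic n) := by
  obtain ⟨h0, -, hbij⟩ := h
  have hIic : Set.Iic n = insert 0 (Set.Icc 1 n) := by
    ext i
    simp only [Set.mem_Iic, Set.mem_insert_iff, Set.mem_Icc]
    omega
  rw [hIic, Set.injOn_insert (by simp), hbij.image_eq, h0]
  exact ⟨hbij.injOn, by simp⟩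

theorem le_add_of_maxCost_le {n k i : ℕ} {a : ℕ → ℕ} (hmax : maxCost n a ≤ k) (hi : i ≤ n) :
    a (i + 1) ≤ a i + (k + 1) := by
  have hjump : ((a (i + 1) : ℤ) - a i).natAbs - 1 ≤ k :=
    (Finset.le_sup (f := fun i => ((a (i + 1) : ℤ) - a i).natAbs - 1)
      (Finset.mem_range.2 (Nat.lt_succ_of_le hi))).trans hmax
  omega

def upCrossings (n m : ℕ) (a : ℕ → ℕ) : Finset ℕ :=
  (Finset.range (n + 1)).filter (fun i => a i ≤ m ∧ m < a (i + 1))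

def downCrossings (n m : ℕ) (a : ℕ → ℕ) : Finset ℕ :=
  (Finset.range (n + 1)).filter (fun i => a (i + 1) ≤ m ∧ m < a i)

theorem crossCount_eq_card_upCrossings_add_card_downCrossings (n m : ℕ) (a : ℕ → ℕ) :
    crossCount n m a = (upCrossings n m a).card + (downCrossings n m a).card := by
  rw [crossCount, Finset.filter_or]
  refine Finset.card_union_of_disjoint (Finset.disjoint_filter.2 fun i _ hup hdown => ?_)
  omega

theorem card_upCrossings_eq_card_downCrossings_add_one {n m : ℕ} {a : ℕ → ℕ}
    (h0 : a 0 ≤ m) (hn : m < a (n + 1)) :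
    (upCrossings n m a).card = (downCrossings n m a).card + 1 := by
  have := card_filter_exit_eq_card_filter_enter_add_one (fun j => a j ≤ m) h0 (not_le.2 hn)
  simpa only [upCrossings, downCrossings, not_le, and_comm (a := m < a _)] using this

theorem card_upCrossings_le {n m k : ℕ} {a : ℕ → ℕ} (hinj : Set.InjOn a (Set.Iic n))
    (hmax : maxCost n a ≤ k) : (upCrossings n m a).card ≤ k + 1 := by
  have hsub : ∀ i ∈ upCrossings n m a, i ≤ n := fun i hi =>
    Nat.lt_succ_iff.1 (Finset.mem_range.1 (Finset.mem_filter.1 hi).1)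
  have hmaps : Set.MapsTo a (upCrossings n m a) (Finset.Icc (m - k) m) := by
    intro i hi
    have hcross := (Finset.mem_filter.1 hi).2
    have := le_add_of_maxCost_le hmax (hsub i hi)
    rw [Finset.mem_coe, Finset.mem_Icc]
    omega
  calc (upCrossings n m a).card
      ≤ (Finset.Icc (m - k) m).card :=
        Finset.card_le_card_of_injOn a hmaps (hinj.mono fun i hi => hsub i hi)
    _ ≤ k + 1 := by rw [Nat.card_Icc]; omega

/-- if the maximum-jump cost of `ā` is at most `k`, then `ā` crosses
every `m`-cut (`1 ≤ m ≤ n`) at most `2k+1` times. -/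
theorem crossCount_le_of_maxCost_le (n k : ℕ) (a : ℕ → ℕ) (h : IsJumpSeq n a)
    (hmax : maxCost n a ≤ k) :
    ∀ m, 1 ≤ m → m ≤ n → crossCount n m a ≤ 2 * k + 1 := by
  intro m _ hmn
  have hup := card_upCrossings_le (m := m) h.injOn_Iic hmax
  have hbalance : (upCrossings n m a).card = (downCrossings n m a).card + 1 :=
    card_upCrossings_eq_card_downCrossings_add_one (by rw [h.1]; exact m.zero_le)
      (by rw [h.2.1]; omega)
  rw [crossCount_eq_card_upCrossings_add_card_downCrossings]
  omega
end

section
/- The number of crossings of any m-cut by a jump sequence is odd. -/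
open scoped Classical

/-! Crossing the `m`-cut is exactly a change of truth value of `a i ≤ m`, which holds at `i = 0`
and fails at `i = n + 1`; a predicate that differs at the two ends of `0, …, n + 1` changes
value an odd number of times. -/

open Finset

theorem odd_card_filter_range_changes_iff (p : ℕ → Prop) [DecidablePred p] (N : ℕ) :
    Odd ((range N).filter fun i => ¬(p i ↔ p (i + 1))).card ↔ ¬(p 0 ↔ p N) := by
  induction N with
  | zero => simp
  | succ N ih =>
    rw [range_add_one, filter_insert]
    split_ifs with hsame
    · rw [ih]
      tauto
    · rw [card_insert_of_notMem (by simp), Nat.odd_add_one, ih]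
      tauto

theorem crossCount_odd_general (n m : ℕ) (a : ℕ → ℕ) (h : IsJumpSeq n a)
    (hm2 : m ≤ n) :
    Odd (crossCount n m a) := by
  obtain ⟨h0, hn, -⟩ := h
  have hcross : crossCount n m a =
      ((range (n + 1)).filter fun i => ¬(a i ≤ m ↔ a (i + 1) ≤ m)).card := by
    unfold crossCount
    congr 1
    exact filter_congr fun i _ => by omega
  rw [hcross, odd_card_filter_range_changes_iff (fun k => a k ≤ m), h0, hn]
  omega

/-- the number of crossings of any `m`-cut (`1 ≤ m ≤ n`) by a jump
sequence is odd. -/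
theorem crossCount_odd (n m : ℕ) (a : ℕ → ℕ) (h : IsJumpSeq n a)
    (hm1 : 1 ≤ m) (hm2 : m ≤ n) :
    Odd (crossCount n m a) :=
  crossCount_odd_general n m a h hm2
end

section
/- Let w be a word of length n and ā a jump sequence with absolute-distance cost at most k such that w_ā is accepted. Then the number of indices i ∈ {1,...,n} with a_i ≠ i is at most (2k+1)(k+1). Consequently, the Hamming distance between w and w_ā is at most (2k+1)(k+1), so boundedness of the ABS semantics implies boundedness of the Hamming semantics. -/
open scoped Classical

/-!
Write `dⱼ = a(j+1) - a(j)`. Since the `dⱼ` are nonzero and sum to `n + 1`, every partial sum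
of `dⱼ - 1` lies between `-k` and `k`, so `|aᵢ - i| ≤ k`; and `∑ (|dⱼ| - dⱼ) = ∑ (|dⱼ| - 1) ≤ k`,
where each backward step contributes at least `2`, so there are at most `k / 2` of them.
If `aᵢ > i`, some later position `p` carries a value `≤ i` (the values `≤ i` cannot all sit at
positions `< i`); the displacement bound gives `p ≤ i + k`, and between `i` and `p` the sequence
must step backwards. Symmetrically if `aᵢ < i`. Hence every non-fixed position lies within
distance `k` of one of at most `k / 2` backward steps, which leaves at most `k²` of them.
-/

open Finset

theorem Set.InjOn.exists_mem_apply_notMem {α : Type*} {f : α → α} {s u : Set α}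
    (hs : s.Finite) (hf : u.InjOn f) (hsu : s ⊆ u) {x : α} (hxu : x ∈ u) (hx : x ∉ s)
    (hfx : f x ∈ s) : ∃ y ∈ s, f y ∉ s := by
  by_contra! h
  obtain ⟨y, hy, hyx⟩ := ((hs.injOn_iff_bijOn_of_mapsTo h).1 (hf.mono hsu)).surjOn hfx
  exact hx (hf (hsu hy) hxu hyx ▸ hy)

theorem exists_apply_succ_lt_of_apply_lt {β : Type*} [LinearOrder β] {f : ℕ → β} {p q : ℕ}
    (hpq : p ≤ q) (h : f q < f p) : ∃ j, p ≤ j ∧ j < q ∧ f (j + 1) < f j := by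
  induction q, hpq using Nat.le_induction with
  | base => exact absurd h (lt_irrefl _)
  | succ q hpq ih =>
    by_cases hq : f (q + 1) < f q
    · exact ⟨q, hpq, q.lt_succ_self, hq⟩
    · obtain ⟨j, hpj, hjq, hj⟩ := ih ((not_lt.1 hq).trans_lt h)
      exact ⟨j, hpj, hjq.trans q.lt_succ_self, hj⟩

def descents (n : ℕ) (a : ℕ → ℕ) : Finset ℕ :=
  (range (n + 1)).filter fun j => a (j + 1) < a j

theorem sum_range_step_sub_one {a : ℕ → ℕ} (h0 : a 0 = 0) (i : ℕ) :
    ∑ j ∈ range i, ((a (j + 1) : ℤ) - a j - 1) = a i - i := by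
  rw [sum_sub_distrib, sum_range_sub (fun t => (a t : ℤ)), h0]
  simp

namespace IsJumpSeq

variable {n : ℕ} {a : ℕ → ℕ}

theorem apply_cases (hj : IsJumpSeq n a) {p : ℕ} (hp : p ≤ n + 1) :
    (p = 0 ∧ a p = 0) ∨ (p = n + 1 ∧ a p = n + 1) ∨ (p ∈ Set.Icc 1 n ∧ a p ∈ Set.Icc 1 n) := by
  obtain ⟨h0, hn, hbij⟩ := hj
  rcases Nat.eq_zero_or_pos p with rfl | hp0
  · exact .inl ⟨rfl, h0⟩
  rcases hp.eq_or_lt with rfl | hpn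
  · exact .inr (.inl ⟨rfl, hn⟩)
  have hmem : p ∈ Set.Icc 1 n := ⟨hp0, by omega⟩
  exact .inr (.inr ⟨hmem, hbij.mapsTo hmem⟩)

theorem mapsTo_Icc (hj : IsJumpSeq n a) :
    Set.MapsTo a (Set.Icc 0 (n + 1)) (Set.Icc 0 (n + 1)) := by
  intro p hp
  rcases hj.apply_cases hp.2 with ⟨-, h⟩ | ⟨-, h⟩ | ⟨-, h⟩ <;> simp only [Set.mem_Icc] at * <;> omega

theorem injOn_Icc (hj : IsJumpSeq n a) : Set.InjOn a (Set.Icc 0 (n + 1)) := by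
  intro p hp q hq hpq
  rcases hj.apply_cases hp.2 with ⟨hp, hap⟩ | ⟨hp, hap⟩ | ⟨hp, hap⟩ <;>
    rcases hj.apply_cases hq.2 with ⟨hq, haq⟩ | ⟨hq, haq⟩ | ⟨hq, haq⟩ <;>
    simp only [Set.mem_Icc] at * <;> try omega
  exact hj.2.2.injOn ⟨hp.1, hp.2⟩ ⟨hq.1, hq.2⟩ hpq

theorem one_le_abs_step (hj : IsJumpSeq n a) {j : ℕ} (hjn : j ≤ n) :
    1 ≤ |(a (j + 1) : ℤ) - a j| := by
  have hstep : a (j + 1) ≠ a j := fun h =>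
    absurd (hj.injOn_Icc ⟨by omega, by omega⟩ ⟨by omega, by omega⟩ h) (by omega)
  exact Int.one_le_abs (sub_ne_zero.2 (by exact_mod_cast hstep))

theorem natCast_absCost (hj : IsJumpSeq n a) :
    (absCost n a : ℤ) = ∑ j ∈ range (n + 1), (|(a (j + 1) : ℤ) - a j| - 1) := by
  rw [absCost, Nat.cast_sum]
  refine sum_congr rfl fun j hj' => ?_
  have hpos : 1 ≤ ((a (j + 1) : ℤ) - a j).natAbs :=
    Int.natAbs_pos.2 (abs_pos.1 (hj.one_le_abs_step (by simp at hj'; omega)))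
  rw [Nat.cast_sub hpos, Int.natCast_natAbs, Nat.cast_one]

theorem sum_step_sub_one_le (hj : IsJumpSeq n a) {s : Finset ℕ} (hs : s ⊆ range (n + 1)) :
    ∑ j ∈ s, ((a (j + 1) : ℤ) - a j - 1) ≤ absCost n a := by
  rw [hj.natCast_absCost]
  calc ∑ j ∈ s, ((a (j + 1) : ℤ) - a j - 1)
      ≤ ∑ j ∈ s, (|(a (j + 1) : ℤ) - a j| - 1) :=
        sum_le_sum fun j _ => by linarith [le_abs_self ((a (j + 1) : ℤ) - a j)]
    _ ≤ ∑ j ∈ range (n + 1), (|(a (j + 1) : ℤ) - a j| - 1) :=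
        sum_le_sum_of_subset_of_nonneg hs fun j hj' _ =>
          sub_nonneg.2 (hj.one_le_abs_step (by simp at hj'; omega))

theorem apply_sub_le_absCost (hj : IsJumpSeq n a) {i : ℕ} (hi : i ≤ n + 1) :
    (a i : ℤ) - i ≤ absCost n a := by
  rw [← sum_range_step_sub_one hj.1]
  exact hj.sum_step_sub_one_le (range_subset_range.2 hi)

theorem sub_apply_le_absCost (hj : IsJumpSeq n a) {i : ℕ} (hi : i ≤ n + 1) :
    (i : ℤ) - a i ≤ absCost n a := by
  have htotal := sum_range_step_sub_one hj.1 (n + 1)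
  rw [hj.2.1, ← sum_range_add_sum_Ico _ hi, sum_range_step_sub_one hj.1] at htotal
  have : (i : ℤ) - a i = ∑ j ∈ Ico i (n + 1), ((a (j + 1) : ℤ) - a j - 1) := by
    push_cast at htotal; linarith
  rw [this]
  exact hj.sum_step_sub_one_le fun j hj' => by simp at hj' ⊢; omega

theorem two_mul_card_descents_le (hj : IsJumpSeq n a) : 2 * #(descents n a) ≤ absCost n a := by
  have hbalance : ∑ j ∈ range (n + 1), ((a (j + 1) : ℤ) - a j - 1) = 0 := by
    rw [sum_range_step_sub_one hj.1, hj.2.1]; push_cast; ring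
  have hgap : ∀ j, 0 ≤ |(a (j + 1) : ℤ) - a j| - ((a (j + 1) : ℤ) - a j) := fun j =>
    sub_nonneg.2 (le_abs_self _)
  suffices h : (2 * #(descents n a) : ℤ) ≤ absCost n a by exact_mod_cast h
  calc (2 * #(descents n a) : ℤ)
      = ∑ _j ∈ descents n a, 2 := by rw [sum_const, nsmul_eq_mul, mul_comm]
    _ ≤ ∑ j ∈ descents n a, (|(a (j + 1) : ℤ) - a j| - ((a (j + 1) : ℤ) - a j)) :=
        sum_le_sum fun j hj' => by
          have : a (j + 1) < a j := (mem_filter.1 hj').2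
          rw [abs_of_neg (by omega)]; omega
    _ ≤ ∑ j ∈ range (n + 1), (|(a (j + 1) : ℤ) - a j| - ((a (j + 1) : ℤ) - a j)) :=
        sum_le_sum_of_subset_of_nonneg (filter_subset _ _) fun j _ _ => hgap j
    _ = absCost n a := by
        rw [hj.natCast_absCost, ← sub_zero (∑ j ∈ range (n + 1), (|(a (j + 1) : ℤ) - a j| - 1)),
          ← hbalance, ← sum_sub_distrib]
        exact sum_congr rfl fun j _ => by ring

theorem exists_gt_apply_le_of_lt_apply (hj : IsJumpSeq n a) {i : ℕ} (hin : i ≤ n)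
    (hi : i < a i) : ∃ p, i < p ∧ p ≤ n + 1 ∧ a p ≤ i := by
  have hai := hj.mapsTo_Icc (a := a) ⟨i.zero_le, by omega⟩
  obtain ⟨p, ⟨hip, hpn⟩, hap⟩ := hj.injOn_Icc.exists_mem_apply_notMem (Set.finite_Ioc i (n + 1))
    (fun p hp => ⟨p.zero_le, hp.2⟩) ⟨i.zero_le, by omega⟩ (by simp) ⟨hi, hai.2⟩
  have hap' := hj.mapsTo_Icc ⟨p.zero_le, hpn⟩
  simp only [Set.mem_Ioc, Set.mem_Icc, not_and_or] at hap hap'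
  exact ⟨p, hip, hpn, by omega⟩

theorem exists_lt_le_apply_of_apply_lt (hj : IsJumpSeq n a) {i : ℕ} (hin : i ≤ n)
    (hi : a i < i) : ∃ p, p < i ∧ i ≤ a p := by
  obtain ⟨p, hpi, hap⟩ := hj.injOn_Icc.exists_mem_apply_notMem (Set.finite_Iio i)
    (fun p hp => ⟨p.zero_le, by simp at hp; omega⟩) ⟨i.zero_le, by omega⟩ (by simp)
    (Set.mem_Iio.2 hi)
  exact ⟨p, hpi, not_lt.1 hap⟩

theorem exists_mem_descents_near (hj : IsJumpSeq n a) {i : ℕ} (hi : i ∈ Icc 1 n)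
    (hai : a i ≠ i) : ∃ j ∈ descents n a, j < i + absCost n a ∧ i ≤ j + absCost n a := by
  rw [mem_Icc] at hi
  have mem_descents {j : ℕ} (hjn : j ≤ n) (h : a (j + 1) < a j) : j ∈ descents n a :=
    mem_filter.2 ⟨mem_range.2 (by omega), h⟩
  rcases hai.lt_or_gt with hlt | hgt
  · obtain ⟨p, hpi, hap⟩ := hj.exists_lt_le_apply_of_apply_lt hi.2 hlt
    have hdisp := hj.apply_sub_le_absCost (i := p) (by omega)
    obtain ⟨j, hpj, hji, hdesc⟩ := exists_apply_succ_lt_of_apply_lt (f := a) hpi.le (by omega)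
    exact ⟨j, mem_descents (by omega) hdesc, by omega, by omega⟩
  · obtain ⟨p, hip, hpn, hap⟩ := hj.exists_gt_apply_le_of_lt_apply hi.2 hgt
    have hdisp := hj.sub_apply_le_absCost hpn
    obtain ⟨j, hij, hjp, hdesc⟩ := exists_apply_succ_lt_of_apply_lt (f := a) hip.le (by omega)
    exact ⟨j, mem_descents (by omega) hdesc, by omega, by omega⟩

theorem card_nonfixed_le (hj : IsJumpSeq n a) :
    #{i ∈ Icc 1 n | a i ≠ i} ≤ absCost n a * absCost n a := by
  set k := absCost n a
  calc #{i ∈ Icc 1 n | a i ≠ i}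
      ≤ #((descents n a).biUnion fun j => Icc (j + 1 - k) (j + k)) := by
        refine card_le_card fun i hi => ?_
        obtain ⟨hi, hai⟩ := mem_filter.1 hi
        obtain ⟨j, hjD, hji, hij⟩ := hj.exists_mem_descents_near hi hai
        exact mem_biUnion.2 ⟨j, hjD, mem_Icc.2 ⟨by omega, hij⟩⟩
    _ ≤ ∑ j ∈ descents n a, #(Icc (j + 1 - k) (j + k)) := card_biUnion_le
    _ ≤ ∑ _j ∈ descents n a, 2 * k := sum_le_sum fun j _ => by rw [Nat.card_Icc]; omega
    _ = 2 * #(descents n a) * k := by rw [sum_const, smul_eq_mul]; ring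
    _ ≤ k * k := Nat.mul_le_mul_right k hj.two_mul_card_descents_le

end IsJumpSeq

theorem hamming_applyJump_le {α : Type*} [Inhabited α] (a : ℕ → ℕ) (w : List α) :
    hamming w (applyJump a w) ≤ #{i ∈ Icc 1 w.length | a i ≠ i} := by
  refine card_le_card_of_injOn (· + 1) (fun i hi => ?_) (fun x _ y _ h => Nat.succ_injective h)
  simp only [coe_filter, mem_range, Set.mem_ofPred_eq, mem_Icc] at hi ⊢
  refine ⟨⟨by omega, by omega⟩, fun hfix => hi.2 ?_⟩
  simp [applyJump, List.getD_eq_getElem?_getD, hi.1, hfix]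

theorem nonfixed_le_of_absCost_le_general {α : Type*} [Inhabited α]
    (w : List α) (k : ℕ) (a : ℕ → ℕ) (hj : IsJumpSeq w.length a)
    (hc : absCost w.length a ≤ k) :
    ((Finset.Icc 1 w.length).filter (fun i => a i ≠ i)).card ≤ (2 * k + 1) * (k + 1) ∧
    hamming w (applyJump a w) ≤ (2 * k + 1) * (k + 1) := by
  have hnonfixed : #{i ∈ Icc 1 w.length | a i ≠ i} ≤ (2 * k + 1) * (k + 1) :=
    calc #{i ∈ Icc 1 w.length | a i ≠ i}
        ≤ absCost w.length a * absCost w.length a := hj.card_nonfixed_le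
      _ ≤ k * k := Nat.mul_le_mul hc hc
      _ ≤ (2 * k + 1) * (k + 1) := by nlinarith
  exact ⟨hnonfixed, (hamming_applyJump_le a w).trans hnonfixed⟩

/-- if `ā` has absolute-distance cost at most `k` and `w_ā` is accepted
(into `L`), then at most `(2k+1)(k+1)` positions satisfy `a_i ≠ i`, and hence
`d_H(w, w_ā) ≤ (2k+1)(k+1)`. -/
theorem nonfixed_le_of_absCost_le {α : Type*} [Inhabited α] (L : Language α)
    (w : List α) (k : ℕ) (a : ℕ → ℕ) (hj : IsJumpSeq w.length a)
    (hc : absCost w.length a ≤ k) (hacc : applyJump a w ∈ L) :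
    ((Finset.Icc 1 w.length).filter (fun i => a i ≠ i)).card ≤ (2 * k + 1) * (k + 1) ∧
    hamming w (applyJump a w) ≤ (2 * k + 1) * (k + 1) :=
  nonfixed_le_of_absCost_le_general w k a hj hc
end

section
/- Let w be a word and w' a permutation of w in a language L with Hamming distance d_H(w,w') ≤ k. Then there exists a jump sequence ā with w_ā = w' (so w_ā ∈ L) whose number of turning indices is at most 3k. Hence boundedness of the Hamming semantics implies boundedness of the reversal semantics. -/
open scoped Classical

/-! Let `D` be the set of positions at which `w` and `w'` differ, so `|D| ≤ k`. Since `w'` is a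
permutation of `w` and the two words agree off `D`, the letters of `w` on `D` are a rearrangement
of those of `w'` on `D`; a permutation of `D` realising this, extended by the identity, is a jump
sequence with `w_ā = w'`. It fixes every index at distance more than one from `D`, so each turning
index lies in `D - 1`, `D` or `D + 1`, giving at most `3|D| ≤ 3k` of them. -/

theorem Multiset.map_filter_ne_eq {ι α : Type*} [DecidableEq α] {s : Multiset ι} {f g : ι → α}
    (h : s.map f = s.map g) :
    (s.filter fun x => f x ≠ g x).map f = (s.filter fun x => f x ≠ g x).map g := by
  have hagree : (s.filter fun x => ¬f x ≠ g x).map f = (s.filter fun x => ¬f x ≠ g x).map g :=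
    Multiset.map_congr rfl fun x hx => not_not.mp (Multiset.mem_filter.mp hx).2
  rw [← Multiset.filter_add_not (fun x => f x ≠ g x) s, Multiset.map_add, Multiset.map_add,
    hagree] at h
  exact add_right_cancel h

theorem Fintype.exists_perm_comp_eq_of_map_eq {ι α : Type*} [Fintype ι] [DecidableEq α]
    {f g : ι → α} (h : Finset.univ.val.map f = Finset.univ.val.map g) :
    ∃ σ : Equiv.Perm ι, ∀ x, f (σ x) = g x := by
  have hfiber (c : α) : Fintype.card {x // g x = c} = Fintype.card {x // f x = c} := by
    have := congrArg (Multiset.count c) h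
    simp only [Multiset.count_map, Fintype.card_subtype, Finset.card_def, Finset.filter_val,
      eq_comm (a := c)] at this ⊢
    exact this.symm
  exact ⟨Equiv.ofFiberEquiv fun c => Fintype.equivOfCardEq (hfiber c),
    Equiv.ofFiberEquiv_map _⟩

theorem Finset.exists_perm_eqOn_of_map_eq {ι α : Type*} [DecidableEq ι] [DecidableEq α]
    {s : Finset ι} {f g : ι → α} (h : s.val.map f = s.val.map g) :
    ∃ π : Equiv.Perm ι, (∀ x ∉ s, π x = x) ∧ ∀ x ∈ s, f (π x) = g x := by
  have hs : Finset.univ.val.map (f ∘ (↑) : s → α) = Finset.univ.val.map (g ∘ (↑) : s → α) := by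
    rwa [Finset.univ_eq_attach, Finset.attach_val, ← Multiset.map_map, ← Multiset.map_map,
      Multiset.attach_map_val, Multiset.attach_map_val]
  obtain ⟨σ, hσ⟩ := Fintype.exists_perm_comp_eq_of_map_eq hs
  refine ⟨Equiv.Perm.ofSubtype σ, fun x hx => Equiv.Perm.ofSubtype_apply_of_not_mem σ hx,
    fun x hx => ?_⟩
  simpa only [Function.comp_apply, ← Equiv.Perm.ofSubtype_apply_coe] using hσ ⟨x, hx⟩

theorem List.map_Icc_getD_pred {α : Type*} (l : List α) (d : α) :
    (Finset.Icc 1 l.length).val.map (fun j => l.getD (j - 1) d) = l := by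
  rw [Nat.Icc_eq_range', Nat.add_sub_cancel, Multiset.map_coe]
  congr 1
  apply List.ext_getElem (by simp)
  intro i _ hi
  simp [hi]

theorem card_filter_Icc_getD_ne_eq_hamming {α : Type*} [Inhabited α] (w w' : List α) :
    ((Finset.Icc 1 w.length).filter
      fun j => w.getD (j - 1) default ≠ w'.getD (j - 1) default).card = hamming w w' := by
  refine Finset.card_nbij' (· - 1) (· + 1) ?_ ?_ ?_ ?_ <;>
    intro i <;> simp +contextual
  all_goals omega

theorem Equiv.Perm.apply_mem_iff_of_forall_notMem {ι : Type*} {π : Equiv.Perm ι} {s : Set ι}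
    (hπ : ∀ x ∉ s, π x = x) (x : ι) : π x ∈ s ↔ x ∈ s := by
  constructor
  · intro h
    by_contra hx
    exact hx (hπ x hx ▸ h)
  · intro hx
    by_contra h
    rw [π.injective (hπ _ h)] at h
    exact h hx

theorem isJumpSeq_of_forall_notMem {n : ℕ} {D : Finset ℕ} {π : Equiv.Perm ℕ}
    (hD : D ⊆ Finset.Icc 1 n) (hπ : ∀ x ∉ D, π x = x) : IsJumpSeq n π := by
  have hout (x : ℕ) (hx : x ∉ Set.Icc 1 n) : π x = x :=
    hπ x fun h => hx (Finset.mem_Icc.mp (hD h))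
  exact ⟨hout 0 (by simp), hout (n + 1) (by simp),
    π.bijOn (π.apply_mem_iff_of_forall_notMem hout)⟩

theorem applyJump_eq_of_getD {α : Type*} [Inhabited α] {w w' : List α} {a : ℕ → ℕ}
    (hlen : w'.length = w.length)
    (h : ∀ j ∈ Finset.Icc 1 w.length, w.getD (a j - 1) default = w'.getD (j - 1) default) :
    applyJump a w = w' := by
  apply List.ext_getElem (by simp [applyJump, hlen])
  intro i hi _
  have hi' : i < w.length := by simpa [applyJump] using hi
  have hi'' : i < w'.length := hlen ▸ hi'
  simpa [applyJump, hi''] using h (i + 1) (by simp; omega)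

theorem not_isTurn_of_fixed {a : ℕ → ℕ} {i : ℕ} (h₀ : a (i - 1) = i - 1) (h₁ : a i = i)
    (h₂ : a (i + 1) = i + 1) : ¬IsTurn a i := by
  rw [IsTurn, h₀, h₁, h₂]
  omega

theorem turnCount_le_three_mul_card {a : ℕ → ℕ} {D : Finset ℕ} (n : ℕ)
    (hD : ∀ x ∉ D, a x = x) : turnCount n a ≤ 3 * D.card := by
  have hsub : (Finset.Icc 1 n).filter (IsTurn a) ⊆ D.biUnion fun d => {d - 1, d, d + 1} := by
    intro i hi
    obtain ⟨hi, hturn⟩ := Finset.mem_filter.mp hi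
    by_contra hnear
    simp only [Finset.mem_biUnion, Finset.mem_insert, Finset.mem_singleton, not_exists,
      not_and] at hnear
    refine not_isTurn_of_fixed (hD _ fun h => ?_) (hD _ fun h => ?_) (hD _ fun h => ?_) hturn
    all_goals have := hnear _ h; simp only [Finset.mem_Icc] at hi; omega
  calc turnCount n a ≤ (D.biUnion fun d => {d - 1, d, d + 1}).card := Finset.card_le_card hsub
    _ ≤ D.card * 3 := Finset.card_biUnion_le_card_mul _ _ _ fun _ _ => Finset.card_le_three
    _ = 3 * D.card := mul_comm _ _

theorem rev_le_of_hamming_le_general {α : Type*} [Inhabited α]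
    (w w' : List α) (k : ℕ) (hperm : w'.Perm w)
    (hd : hamming w w' ≤ k) :
    ∃ a : ℕ → ℕ, IsJumpSeq w.length a ∧ applyJump a w = w' ∧
      turnCount w.length a ≤ 3 * k := by
  have hlen : w'.length = w.length := hperm.length_eq
  set D := (Finset.Icc 1 w.length).filter
    fun j => w.getD (j - 1) default ≠ w'.getD (j - 1) default
  have hmap : D.val.map (fun j => w.getD (j - 1) default)
      = D.val.map (fun j => w'.getD (j - 1) default) := by
    rw [Finset.filter_val]
    refine Multiset.map_filter_ne_eq ?_
    rw [List.map_Icc_getD_pred, ← hlen, List.map_Icc_getD_pred]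
    exact Multiset.coe_eq_coe.mpr hperm.symm
  obtain ⟨π, hfix, hπ⟩ := Finset.exists_perm_eqOn_of_map_eq hmap
  refine ⟨π, isJumpSeq_of_forall_notMem (Finset.filter_subset _ _) hfix,
    applyJump_eq_of_getD hlen fun j hj => ?_, ?_⟩
  · by_cases hjD : j ∈ D
    · exact hπ j hjD
    · rw [hfix j hjD]
      simpa [D, hj] using hjD
  · calc turnCount w.length π ≤ 3 * D.card := turnCount_le_three_mul_card _ hfix
      _ ≤ 3 * k := by rw [card_filter_Icc_getD_ne_eq_hamming]; omega

/-- if `w' ∈ L` is a permutation of `w` with `d_H(w,w') ≤ k`, then there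
is a jump sequence `ā` with `w_ā = w'` and at most `3k` turning indices. -/
theorem rev_le_of_hamming_le {α : Type*} [Inhabited α] (L : Language α)
    (w w' : List α) (k : ℕ) (hperm : w'.Perm w) (hmem : w' ∈ L)
    (hd : hamming w w' ≤ k) :
    ∃ a : ℕ → ℕ, IsJumpSeq w.length a ∧ applyJump a w = w' ∧
      turnCount w.length a ≤ 3 * k :=
  rev_le_of_hamming_le_general w w' k hperm hd
end

section
/- Let w and w' be words of equal length with w' a permutation of w. Then there exists a jump sequence ā with w_ā = w' such that for every index i, if w_{a_i} = w_i then a_i = i (i.e., one may assume the jump sequence has no unnecessary swaps of identical letters), and moreover d_H(w, w_ā) = d_H(w, w'). -/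
open scoped Classical

/-!
Among the permutations `σ` of the positions with `w ∘ σ = w'`, take one moving the fewest
points. If it moved a position `i` with `w (σ i) = w i`, then `swap i (σ i) * σ` would still
realize `w'`, fix `i`, and move strictly fewer points. Shifting `σ` to `1`-based indices gives
the jump sequence.
-/

open Equiv Finset

theorem exists_perm_comp_eq_fixing_of_apply_eq {ι α : Type*} [Fintype ι] (f : ι → α)
    (σ : Perm ι) : ∃ τ : Perm ι, f ∘ τ = f ∘ σ ∧ ∀ i, f (τ i) = f i → τ i = i := by
  obtain ⟨τ, hτ, hmin⟩ := (univ.filter fun τ : Perm ι => f ∘ τ = f ∘ σ).exists_min_image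
    (fun τ => #τ.support) ⟨σ, by simp⟩
  rw [mem_filter] at hτ
  refine ⟨τ, hτ.2, fun i hi => by_contra fun hne => ?_⟩
  have hswap : f ∘ (swap i (τ i) * τ) = f ∘ σ := by
    rw [← hτ.2]; funext k; exact apply_swap_eq_self hi.symm (τ k)
  exact (Perm.card_support_swap_mul hne).not_ge (hmin _ (mem_filter.2 ⟨mem_univ _, hswap⟩))

theorem List.card_get_eq_count {α : Type*} (l : List α) (c : α) :
    Fintype.card {i : Fin l.length // l.get i = c} = l.count c := by
  rw [Fintype.card_subtype]
  exact Fin.card_filter_univ_eq_vector_get_eq_count c ⟨l, rfl⟩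

theorem List.Perm.exists_perm_ofFn_get_comp {α : Type*} {l l' : List α} (h : l'.Perm l) :
    ∃ σ : Equiv.Perm (Fin l.length), List.ofFn (l.get ∘ σ) = l' := by
  have hcard (c : α) : Fintype.card {i : Fin l'.length // l'.get i = c} =
      Fintype.card {i : Fin l.length // l.get i = c} := by
    rw [l.card_get_eq_count, l'.card_get_eq_count, h.count_eq]
  let e := Equiv.ofFiberEquiv fun c => Fintype.equivOfCardEq (hcard c)
  have he (i : Fin l'.length) : l.get (e i) = l'.get i := Equiv.ofFiberEquiv_map _ i
  refine ⟨(finCongr h.length_eq.symm).trans e, List.ext_get (by simp [h.length_eq]) fun i _ hi => ?_⟩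
  simpa using he ⟨i, hi⟩

def jumpSeqOfPerm {n : ℕ} (σ : Perm (Fin n)) : ℕ → ℕ
  | 0 => 0
  | i + 1 => if h : i < n then σ ⟨i, h⟩ + 1 else i + 1

section jumpSeqOfPerm

variable {n : ℕ} (σ : Perm (Fin n))

theorem jumpSeqOfPerm_succ {i : ℕ} (h : i < n) : jumpSeqOfPerm σ (i + 1) = σ ⟨i, h⟩ + 1 :=
  dif_pos h

theorem isJumpSeq_jumpSeqOfPerm : IsJumpSeq n (jumpSeqOfPerm σ) := by
  refine ⟨rfl, dif_neg (lt_irrefl n), ?_⟩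
  have hmaps : Set.MapsTo (jumpSeqOfPerm σ) (Set.Icc 1 n) (Set.Icc 1 n) := by
    rintro (_ | i) ⟨hi₁, hin⟩
    · omega
    rw [jumpSeqOfPerm_succ σ hin]
    exact ⟨by omega, (σ _).isLt⟩
  refine ((Set.finite_Icc 1 n).injOn_iff_bijOn_of_mapsTo hmaps).1 ?_
  rintro (_ | i) ⟨hi₁, hin⟩ (_ | j) ⟨hj₁, hjn⟩ hij
  · rfl
  · omega
  · omega
  rw [jumpSeqOfPerm_succ σ hin, jumpSeqOfPerm_succ σ hjn, add_left_inj, Fin.val_inj] at hij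
  simpa using σ.injective hij

end jumpSeqOfPerm

theorem applyJump_jumpSeqOfPerm {α : Type*} [Inhabited α] (w : List α)
    (σ : Perm (Fin w.length)) : applyJump (jumpSeqOfPerm σ) w = List.ofFn (w.get ∘ σ) :=
  List.ext_getElem (by simp [applyJump]) fun i _ hi => by
    simp only [List.length_ofFn] at hi
    simp [applyJump, jumpSeqOfPerm_succ σ hi]

theorem jumpSeqOfPerm_eq_self_of_getD_eq {α : Type*} [Inhabited α] {w : List α}
    {σ : Perm (Fin w.length)} (hσ : ∀ k, w.get (σ k) = w.get k → σ k = k) {i : ℕ}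
    (hi : 1 ≤ i) (hiw : i ≤ w.length)
    (h : w.getD (jumpSeqOfPerm σ i - 1) default = w.getD (i - 1) default) :
    jumpSeqOfPerm σ i = i := by
  obtain ⟨k, rfl⟩ : ∃ k, i = k + 1 := ⟨i - 1, by omega⟩
  have hk : k < w.length := by omega
  rw [jumpSeqOfPerm_succ σ hk] at h ⊢
  rw [Nat.add_sub_cancel, Nat.add_sub_cancel, List.getD_eq_getElem _ _ (σ _).isLt,
    List.getD_eq_getElem _ _ hk] at h
  rw [hσ ⟨k, hk⟩ h]

/-- if `w'` is a permutation of `w`, there is a jump sequence `ā` with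
`w_ā = w'` which has no unnecessary swaps of identical letters: whenever
`w_{a_i} = w_i` we have `a_i = i`; moreover `d_H(w, w_ā) = d_H(w, w')`. -/
theorem exists_jumpSeq_no_useless_swaps {α : Type*} [Inhabited α] (w w' : List α)
    (hperm : w'.Perm w) :
    ∃ a : ℕ → ℕ, IsJumpSeq w.length a ∧ applyJump a w = w' ∧
      (∀ i, 1 ≤ i → i ≤ w.length →
        w.getD (a i - 1) default = w.getD (i - 1) default → a i = i) ∧
      hamming w (applyJump a w) = hamming w w' := by
  obtain ⟨σ, hσ⟩ := hperm.exists_perm_ofFn_get_comp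
  obtain ⟨τ, hτ, hfix⟩ := exists_perm_comp_eq_fixing_of_apply_eq w.get σ
  have happly : applyJump (jumpSeqOfPerm τ) w = w' := by
    rw [applyJump_jumpSeqOfPerm, hτ, hσ]
  exact ⟨jumpSeqOfPerm τ, isJumpSeq_jumpSeqOfPerm τ, happly,
    fun _ hi hiw => jumpSeqOfPerm_eq_self_of_getD_eq hfix hi hiw, by rw [happly]⟩
end

section
/- Let L = a*b* as a language over {a,b}. For every word w ∈ {a,b}*, there is a jump sequence ā with w_ā ∈ L and at most 2 turning indices; i.e., the reversal semantics of a*b* is bounded by 2. However, for the word b^n a^n, every jump sequence ā with w_ā ∈ a*b* satisfies a_1 ≥ n+1, so the maximum-jump cost of ā is at least n; hence the maximum-jump semantics of a*b* is unbounded. -/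
open scoped Classical

/-- The language `a*b*` over the two-letter alphabet `Fin 2` (`a = 0`, `b = 1`). -/
def LangAB : Language (Fin 2) :=
  {w | ∃ p q : ℕ, w = List.replicate p (0 : Fin 2) ++ List.replicate q (1 : Fin 2)}

/-!
Sorting the letters of `w` stably — first the `a`s, then the `b`s, each in their original
order — visits positions along two increasing runs, so the jump sequence can only turn where
the runs meet. Conversely, a permutation of `bⁿaⁿ` in `a*b*` must start with an `a` as soon
as `n > 0`, so its first jump already skips the `n` leading `b`s.
-/

def jumpOfList (l : List ℕ) (i : ℕ) : ℕ :=
  (0 :: l ++ [l.length + 1]).getD i i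

lemma jumpOfList_eq_getElem {l : List ℕ} {i : ℕ} (h₁ : 1 ≤ i) (h₂ : i ≤ l.length) :
    jumpOfList l i = l[i - 1] := by
  obtain ⟨j, rfl⟩ : ∃ j, i = j + 1 := ⟨i - 1, by omega⟩
  have hj : j < l.length := by omega
  simp [jumpOfList, List.getD_eq_getElem?_getD, List.getElem?_append_left hj,
    List.getElem?_eq_getElem hj]

lemma isJumpSeq_jumpOfList {l : List ℕ} (hl : l.Perm ((List.range l.length).map (· + 1))) :
    IsJumpSeq l.length (jumpOfList l) := by
  have mem_iff (x : ℕ) : x ∈ l ↔ x ∈ Set.Icc 1 l.length := by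
    rw [hl.mem_iff, List.mem_map, Set.mem_Icc]
    exact ⟨by rintro ⟨i, hi, rfl⟩; simp at hi; omega,
      fun h => ⟨x - 1, List.mem_range.2 (by omega), by omega⟩⟩
  refine ⟨rfl, by simp [jumpOfList], ?mapsTo, ?injOn, ?surjOn⟩
  case mapsTo =>
    intro i ⟨h₁, h₂⟩
    rw [jumpOfList_eq_getElem h₁ h₂, ← mem_iff]
    exact List.getElem_mem _
  case injOn =>
    intro i ⟨hi₁, hi₂⟩ j ⟨hj₁, hj₂⟩ hij
    rw [jumpOfList_eq_getElem hi₁ hi₂, jumpOfList_eq_getElem hj₁ hj₂,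
      (hl.nodup_iff.2 (List.nodup_range.map fun _ _ => Nat.succ_inj.1)).getElem_inj_iff] at hij
    omega
  case surjOn =>
    intro x hx
    obtain ⟨j, hj, rfl⟩ := List.getElem_of_mem ((mem_iff x).2 hx)
    exact ⟨j + 1, ⟨by omega, hj⟩, jumpOfList_eq_getElem (by omega) hj⟩

lemma applyJump_jumpOfList {α : Type*} [Inhabited α] {l : List ℕ} {w : List α}
    (hl : l.length = w.length) :
    applyJump (jumpOfList l) w = l.map fun j => w.getD (j - 1) default := by
  refine List.ext_getElem (by simp [applyJump, hl]) fun i hi _ => ?_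
  simp only [applyJump, List.length_map, List.length_range] at hi
  simp [applyJump, jumpOfList_eq_getElem (by omega : 1 ≤ i + 1) (by omega : i + 1 ≤ l.length)]

lemma turnCount_le_two_of_lt_succ {n k : ℕ} {a : ℕ → ℕ}
    (h : ∀ i ≤ n, i ≠ k → a i < a (i + 1)) : turnCount n a ≤ 2 := by
  have hsub : (Finset.Icc 1 n).filter (IsTurn a ·) ⊆ {k, k + 1} := by
    intro i hi
    simp only [Finset.mem_filter, Finset.mem_Icc] at hi
    obtain ⟨⟨hi₁, hin⟩, hturn⟩ := hi
    by_contra hk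
    simp only [Finset.mem_insert, Finset.mem_singleton, not_or] at hk
    have hprev := h (i - 1) (by omega) (by omega)
    rw [Nat.sub_add_cancel hi₁] at hprev
    have hnext := h i hin hk.1
    rcases hturn with ⟨_, _⟩ | ⟨_, _⟩ <;> omega
  exact (Finset.card_le_card hsub).trans Finset.card_le_two

lemma List.rel_getElem_succ_append {α : Type*} {R : α → α → Prop} {u v : List α}
    (hu : u.Pairwise R) (hv : v.Pairwise R) {i : ℕ} (hi : i + 1 < (u ++ v).length)
    (hseam : i + 1 ≠ u.length) : R (u ++ v)[i] (u ++ v)[i + 1] := by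
  rw [List.length_append] at hi
  rcases Nat.lt_or_ge (i + 1) u.length with hlt | hge
  · rw [List.getElem_append_left (by omega), List.getElem_append_left hlt]
    exact List.pairwise_iff_getElem.1 hu _ _ _ _ (Nat.lt_succ_self i)
  · rw [List.getElem_append_right (by omega), List.getElem_append_right hge]
    exact List.pairwise_iff_getElem.1 hv _ _ _ _ (by omega)

lemma turnCount_jumpOfList_append_le_two {l₁ l₂ : List ℕ}
    (h₁ : l₁.Pairwise (· < ·)) (h₂ : l₂.Pairwise (· < ·))
    (hpos : ∀ x ∈ l₁, 0 < x) (hlt : ∀ x ∈ l₂, x < (l₁ ++ l₂).length + 1) :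
    turnCount (l₁ ++ l₂).length (jumpOfList (l₁ ++ l₂)) ≤ 2 := by
  set n := (l₁ ++ l₂).length
  have hjump (i : ℕ) :
      jumpOfList (l₁ ++ l₂) i = ((0 :: l₁) ++ (l₂ ++ [n + 1])).getD i i := by
    simp [jumpOfList, n]
  have hu : (0 :: l₁).Pairwise (· < ·) := List.pairwise_cons.2 ⟨hpos, h₁⟩
  have hv : (l₂ ++ [n + 1]).Pairwise (· < ·) :=
    List.pairwise_append.2 ⟨h₂, List.pairwise_singleton _ _, fun x hx y hy => by
      rw [List.mem_singleton.1 hy]; exact hlt x hx⟩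
  refine turnCount_le_two_of_lt_succ (k := l₁.length) fun i hin hik => ?_
  have hlen : ((0 :: l₁) ++ (l₂ ++ [n + 1])).length = n + 2 := by simp [n]; omega
  rw [hjump, hjump, List.getD_eq_getElem _ _ (by omega), List.getD_eq_getElem _ _ (by omega)]
  exact List.rel_getElem_succ_append hu hv (by omega) (by simpa using hik)

section StableSort

variable {α : Type*} [Inhabited α] (w : List α) (p : α → Bool)

def positionsWhere : List ℕ :=
  ((List.range w.length).filter fun i => p (w.getD i default)).map (· + 1)

def stableSortJump : ℕ → ℕ :=
  jumpOfList (positionsWhere w p ++ positionsWhere w fun c => !p c)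

lemma pairwise_positionsWhere : (positionsWhere w p).Pairwise (· < ·) :=
  (List.pairwise_lt_range.filter _).map _ fun _ _ => Nat.succ_lt_succ

lemma mem_positionsWhere {x : ℕ} (hx : x ∈ positionsWhere w p) : 0 < x ∧ x ≤ w.length := by
  obtain ⟨i, hi, rfl⟩ := List.mem_map.1 hx
  have := List.mem_range.1 (List.mem_filter.1 hi).1
  omega

lemma map_positionsWhere :
    (positionsWhere w p).map (fun j => w.getD (j - 1) default) = w.filter p := by
  have hw : (List.range w.length).map (fun i => w.getD i default) = w :=
    List.ext_getElem (by simp) fun i hi _ => by simp at hi; simp [hi]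
  conv_rhs => rw [← hw]
  simp only [positionsWhere, List.map_map, List.filter_map]
  rfl

lemma positionsWhere_append_perm :
    (positionsWhere w p ++ positionsWhere w fun c => !p c).Perm
      ((List.range w.length).map (· + 1)) := by
  rw [positionsWhere, positionsWhere, ← List.map_append]
  exact (List.filter_append_perm _ _).map _

lemma length_positionsWhere_append :
    (positionsWhere w p ++ positionsWhere w fun c => !p c).length = w.length := by
  simp [(positionsWhere_append_perm w p).length_eq]

lemma isJumpSeq_stableSortJump : IsJumpSeq w.length (stableSortJump w p) := by
  have h := isJumpSeq_jumpOfList (l := positionsWhere w p ++ positionsWhere w fun c => !p c)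
  rw [length_positionsWhere_append] at h
  exact h (positionsWhere_append_perm w p)

lemma applyJump_stableSortJump :
    applyJump (stableSortJump w p) w = w.filter p ++ w.filter fun c => !p c := by
  rw [stableSortJump, applyJump_jumpOfList (length_positionsWhere_append w p), List.map_append,
    map_positionsWhere, map_positionsWhere]

lemma turnCount_stableSortJump_le_two : turnCount w.length (stableSortJump w p) ≤ 2 := by
  rw [← length_positionsWhere_append w p]
  refine turnCount_jumpOfList_append_le_two (pairwise_positionsWhere w p)
    (pairwise_positionsWhere w _) (fun x hx => (mem_positionsWhere w p hx).1) fun x hx => ?_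
  rw [length_positionsWhere_append]
  exact Nat.lt_succ_of_le (mem_positionsWhere w _ hx).2

end StableSort

lemma filter_append_filter_not_mem_LangAB (w : List (Fin 2)) :
    (w.filter (· == 0) ++ w.filter fun c => !(c == 0)) ∈ LangAB := by
  have hb : (w.filter fun c => !(c == 0)) = w.filter (· == 1) :=
    List.filter_congr fun c _ => by fin_cases c <;> rfl
  exact ⟨_, _, by rw [hb, List.filter_beq, List.filter_beq]⟩

lemma getElem?_applyJump {α : Type*} [Inhabited α] (a : ℕ → ℕ) {w : List α} {i : ℕ}
    (hi : i < w.length) : (applyJump a w)[i]? = some (w.getD (a (i + 1) - 1) default) := by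
  simp [applyJump, hi]

lemma IsJumpSeq.getElem_mem_applyJump {α : Type*} [Inhabited α] {a : ℕ → ℕ} {w : List α}
    (hJ : IsJumpSeq w.length a) {j : ℕ} (hj : j < w.length) : w[j] ∈ applyJump a w := by
  obtain ⟨i, ⟨hi₁, hi₂⟩, hij⟩ :=
    hJ.2.2.surjOn (⟨by omega, hj⟩ : j + 1 ∈ Set.Icc 1 w.length)
  have h := getElem?_applyJump a (w := w) (i := i - 1) (by omega)
  rw [Nat.sub_add_cancel hi₁, hij, Nat.add_sub_cancel, List.getD_eq_getElem _ _ hj] at h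
  exact List.mem_of_getElem? h

lemma getElem?_zero_of_mem_LangAB {u : List (Fin 2)} (hu : u ∈ LangAB) (h0 : 0 ∈ u) :
    u[0]? = some 0 := by
  obtain ⟨p, q, rfl⟩ := hu
  cases p with
  | zero => simp [List.mem_replicate] at h0
  | succ p => simp [List.replicate_succ]

lemma succ_le_apply_one_of_applyJump_mem_LangAB {n : ℕ} {a : ℕ → ℕ}
    (hJ : IsJumpSeq (2 * n) a)
    (hL : applyJump a (List.replicate n (1 : Fin 2) ++ List.replicate n 0) ∈ LangAB) :
    n + 1 ≤ a 1 := by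
  set w := List.replicate n (1 : Fin 2) ++ List.replicate n 0
  have hlen : w.length = 2 * n := by simp [w]; omega
  rcases Nat.eq_zero_or_pos n with rfl | hn
  · exact hJ.2.1.ge
  have hlast : w[2 * n - 1]'(by omega) = 0 := by
    simp only [w]
    rw [List.getElem_append_right (by simp; omega)]
    simp
  have hmem := (hlen ▸ hJ).getElem_mem_applyJump (j := 2 * n - 1) (by omega)
  rw [hlast] at hmem
  have hfirst := getElem?_zero_of_mem_LangAB hL hmem
  rw [getElem?_applyJump a (by omega), Option.some_inj] at hfirst
  by_contra! h
  simp [w, List.getD_eq_getElem?_getD, List.getElem?_append, (by omega : a 1 - 1 < n)] at hfirst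

lemma apply_one_sub_one_le_maxCost {n : ℕ} {a : ℕ → ℕ} (h0 : a 0 = 0) :
    a 1 - 1 ≤ maxCost n a := by
  calc a 1 - 1 = ((a (0 + 1) : ℤ) - (a 0 : ℤ)).natAbs - 1 := by simp [h0]
    _ ≤ maxCost n a := Finset.le_sup (f := fun i => ((a (i + 1) : ℤ) - (a i : ℤ)).natAbs - 1)
        (Finset.mem_range.2 n.succ_pos)

/-- every word over `{a,b}` has an accepting jump sequence into `a*b*`
with at most 2 turning indices (so REV is bounded by 2); but for `w = bⁿaⁿ` every
accepting jump sequence has `a_1 ≥ n+1` and hence maximum-jump cost at least `n`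
(so MAX is unbounded). -/
theorem astar_bstar_rev_bounded_max_unbounded :
    (∀ w : List (Fin 2), ∃ a : ℕ → ℕ, IsJumpSeq w.length a ∧
        applyJump a w ∈ LangAB ∧ turnCount w.length a ≤ 2) ∧
    (∀ n : ℕ, ∀ a : ℕ → ℕ, IsJumpSeq (2 * n) a →
        applyJump a (List.replicate n (1 : Fin 2) ++ List.replicate n (0 : Fin 2))
          ∈ LangAB →
        n + 1 ≤ a 1 ∧ n ≤ maxCost (2 * n) a) := by
  refine ⟨fun w => ⟨stableSortJump w (· == 0), isJumpSeq_stableSortJump w _, ?_,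
    turnCount_stableSortJump_le_two w _⟩, fun n a hJ hL => ?_⟩
  · rw [applyJump_stableSortJump]
    exact filter_append_filter_not_mem_LangAB w
  · have h1 := succ_le_apply_one_of_applyJump_mem_LangAB hJ hL
    exact ⟨h1, (Nat.le_sub_one_of_lt h1).trans (apply_one_sub_one_le_maxCost hJ.1)⟩
end

section
/- For the language L = c* a c* b c* over {a,b,c} and the word w = b c^n a: every jump sequence ā with w_ā ∈ L has absolute-distance cost at least n+1. Hence the ABS semantics of L is unbounded. -/
open scoped Classical

/-- The language `c* a c* b c*` over `Fin 3` (`a = 0`, `b = 1`, `c = 2`). -/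
def LangCACBC : Language (Fin 3) :=
  {w | ∃ p q r : ℕ, w = List.replicate p (2 : Fin 3) ++ [(0 : Fin 3)] ++
      List.replicate q (2 : Fin 3) ++ [(1 : Fin 3)] ++ List.replicate r (2 : Fin 3)}

/-
If `w_ā = cᵖ a c^q b cʳ`, the letter `a` of `w_ā` comes from the last position of `w = b cⁿ a`
and the later letter `b` from the first, so `ā` runs from `0` up to `n + 2`, back down to `1`
and up again to `n + 3`. Its total variation is therefore at least `3n + 5`, while each of its
`n + 3` steps has length at least one (`ā` is injective), so the cost is at least `2n + 2`.
-/

open Finset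

lemma natAbs_sub_le_sum_Ico (f : ℕ → ℤ) {u v : ℕ} (huv : u ≤ v) :
    (f v - f u).natAbs ≤ ∑ i ∈ Ico u v, (f (i + 1) - f i).natAbs := by
  rw [← sum_Ico_sub f huv]
  exact Int.natAbs_sum_le _ _

lemma applyJump_getD {α : Type*} [Inhabited α] (a : ℕ → ℕ) (w : List α) {i : ℕ}
    (hi : i < w.length) :
    (applyJump a w).getD i default = w.getD (a (i + 1) - 1) default := by
  simp [applyJump, List.getD_eq_getElem?_getD, hi]

lemma exists_getD_eq_of_mem_LangCACBC {w : List (Fin 3)} (hw : w ∈ LangCACBC) :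
    ∃ s t, s < t ∧ t < w.length ∧ w.getD s default = 0 ∧ w.getD t default = 1 := by
  obtain ⟨p, q, r, rfl⟩ := hw
  refine ⟨p, p + 1 + q, by omega, by simp; omega, ?_, ?_⟩
  · simp [List.getD_eq_getElem?_getD]
  · have : p + 1 + q - p = q + 1 := by omega
    simp [List.getD_eq_getElem?_getD, List.getElem?_append, this,
      show ¬p + 1 + q < p by omega]

lemma getD_b_replicate_c_a {n k : ℕ} (hk : k ≤ n + 1) :
    ([(1 : Fin 3)] ++ List.replicate n 2 ++ [0]).getD k default =
      if k = 0 then 1 else if k = n + 1 then 0 else 2 := by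
  rcases k with _ | k
  · simp
  · rcases Nat.lt_or_ge k n with hkn | hkn
    · simp [List.getD_eq_getElem?_getD, List.getElem?_append, hkn, hkn.ne]
    · obtain rfl : k = n := by omega
      simp [List.getD_eq_getElem?_getD]

namespace IsJumpSeq

variable {m : ℕ} {a : ℕ → ℕ}

lemma mem_Icc (hj : IsJumpSeq m a) {i : ℕ} (hi₁ : 1 ≤ i) (hi₂ : i ≤ m) : a i ∈ Set.Icc 1 m :=
  hj.2.2.mapsTo ⟨hi₁, hi₂⟩

lemma apply_succ_ne (hj : IsJumpSeq m a) {i : ℕ} (hi : i ≤ m) : a (i + 1) ≠ a i := by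
  obtain ⟨h₀, hlast, hbij⟩ := hj
  rcases hi.eq_or_lt with rfl | him
  · rcases Nat.eq_zero_or_pos i with rfl | hi₀
    · simp [h₀, hlast]
    · have := hbij.mapsTo (show i ∈ Set.Icc 1 i from ⟨hi₀, le_rfl⟩)
      grind
  rcases Nat.eq_zero_or_pos i with rfl | hi₀
  · have := hbij.mapsTo (show 1 ∈ Set.Icc 1 m from ⟨le_rfl, him⟩)
    grind
  exact fun h => by simpa using hbij.injOn ⟨by omega, him⟩ ⟨hi₀, hi⟩ h

lemma absCost_add_eq (hj : IsJumpSeq m a) :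
    absCost m a + (m + 1) = ∑ i ∈ range (m + 1), ((a (i + 1) : ℤ) - a i).natAbs := by
  have hstep : ∀ i ∈ range (m + 1), 1 ≤ ((a (i + 1) : ℤ) - a i).natAbs := fun i hi => by
    have := hj.apply_succ_ne (Nat.lt_succ_iff.mp (mem_range.mp hi))
    omega
  rw [absCost, ← sum_congr rfl fun i hi => Nat.sub_add_cancel (hstep i hi), sum_add_distrib,
    sum_const, card_range, smul_eq_mul, mul_one]

lemma natAbs_add_natAbs_add_natAbs_le (hj : IsJumpSeq m a) {s t : ℕ} (hst : s ≤ t)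
    (ht : t ≤ m + 1) :
    ((a s : ℤ) - a 0).natAbs + ((a t : ℤ) - a s).natAbs + ((a (m + 1) : ℤ) - a t).natAbs ≤
      absCost m a + (m + 1) := by
  have h₁ := natAbs_sub_le_sum_Ico (fun i => (a i : ℤ)) (Nat.zero_le s)
  have h₂ := natAbs_sub_le_sum_Ico (fun i => (a i : ℤ)) hst
  have h₃ := natAbs_sub_le_sum_Ico (fun i => (a i : ℤ)) ht
  rw [hj.absCost_add_eq, range_eq_Ico, ← sum_Ico_consecutive _ (Nat.zero_le s) (hst.trans ht),
    ← sum_Ico_consecutive _ hst ht]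
  omega

lemma getD_applyJump_b_replicate_c_a {n : ℕ} (hj : IsJumpSeq (n + 2) a) {i : ℕ}
    (hi : i < n + 2) :
    (applyJump a ([(1 : Fin 3)] ++ List.replicate n 2 ++ [0])).getD i default =
      if a (i + 1) = 1 then 1 else if a (i + 1) = n + 2 then 0 else 2 := by
  have ha := hj.mem_Icc (i := i + 1) (by omega) (by omega)
  rw [applyJump_getD a _ (by simp; omega), getD_b_replicate_c_a (by grind)]
  simp only [show a (i + 1) - 1 = 0 ↔ a (i + 1) = 1 by grind,
    show a (i + 1) - 1 = n + 1 ↔ a (i + 1) = n + 2 by grind]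

end IsJumpSeq

/-- for `w = b cⁿ a`, every jump sequence accepting into `c* a c* b c*`
has absolute-distance cost at least `n+1`; hence the ABS semantics is unbounded. -/
theorem cacbc_abs_unbounded (n : ℕ) (a : ℕ → ℕ) (hj : IsJumpSeq (n + 2) a)
    (hacc : applyJump a
        (([(1 : Fin 3)] ++ List.replicate n (2 : Fin 3) ++ [(0 : Fin 3)]))
      ∈ LangCACBC) :
    n + 1 ≤ absCost (n + 2) a := by
  obtain ⟨s, t, hst, ht, hs, htb⟩ := exists_getD_eq_of_mem_LangCACBC hacc
  have hlen : (applyJump a ([(1 : Fin 3)] ++ List.replicate n 2 ++ [0])).length = n + 2 := by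
    simp [applyJump]
  rw [hj.getD_applyJump_b_replicate_c_a (by omega)] at hs htb
  have has : a (s + 1) = n + 2 := by split_ifs at hs <;> simp_all
  have hat : a (t + 1) = 1 := by split_ifs at htb <;> simp_all
  have hvar := hj.natAbs_add_natAbs_add_natAbs_le (s := s + 1) (t := t + 1) (by omega) (by omega)
  rw [hj.1, hj.2.1, has, hat] at hvar
  omega
end
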